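/- If a maximal arc of degree k exists in a projective plane of order q with 1 < k < q, then k divides q. -/

import Mathlib

/-- A finite projective plane of order `q`. -/
structure ProjPlane (P L : Type*) where
  finP : Finite P
  finL : Finite L
  incid : P → L → Prop
  q : ℕ
  join : ∀ p₁ p₂ : P, p₁ ≠ p₂ → ∃! l : L, incid p₁ l ∧ incid p₂ l
  meet : ∀ l₁ l₂ : L, l₁ ≠ l₂ → ∃! p : P, incid p l₁ ∧ incid p l₂
  point_deg : ∀ p : P, {l : L | incid p l}.ncard = q + 1
  line_deg : ∀ l : L, {p : P | incid p l}.ncard = q + 1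

/-- The point set of a line. -/
def ProjPlane.lineSet {P L : Type*} (Pl : ProjPlane P L) (l : L) : Set P :=
  {p : P | Pl.incid p l}

/-- A maximal arc of degree `k`: a nonempty set of points meeting every line
in exactly `k` or exactly `0` points. -/
def IsMaxArc {P L : Type*} (Pl : ProjPlane P L) (A : Set P) (k : ℕ) : Prop :=
  A.Nonempty ∧ ∀ l : L, (Pl.lineSet l ∩ A).ncard = k ∨ (Pl.lineSet l ∩ A).ncard = 0

/-! Count the points of `A` along the `q + 1` lines through a point. Through a point of `A`
every line meets `A` in `k` points, so `|A| = (q + 1)(k - 1) + 1`; through a point outside `A`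
every line meets `A` in `0` or `k` points, so `k ∣ |A|`. Hence `k` divides `(q + 1)k - |A| = q`. -/

namespace ProjPlane

variable {P L : Type*} (Pl : ProjPlane P L)

lemma finite_pencil (p : P) : {l : L | Pl.incid p l}.Finite :=
  have := Pl.finL
  Set.toFinite _

lemma pencil_pairwiseDisjoint (S : Set P) (p : P) :
    {l : L | Pl.incid p l}.PairwiseDisjoint fun l => (Pl.lineSet l ∩ S) \ {p} := by
  intro l₁ hl₁ l₂ hl₂ hne
  refine Set.disjoint_left.2 fun a ha₁ ha₂ => ha₁.2 ?_
  obtain ⟨x, -, hx⟩ := Pl.meet l₁ l₂ hne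
  exact (hx a ⟨ha₁.1.1, ha₂.1.1⟩).trans (hx p ⟨hl₁, hl₂⟩).symm

lemma ncard_sdiff_singleton_eq_finsum (S : Set P) (p : P) :
    (S \ {p}).ncard = ∑ᶠ l ∈ {l : L | Pl.incid p l}, ((Pl.lineSet l ∩ S) \ {p}).ncard := by
  have := Pl.finP
  have hcover : S \ {p} = ⋃ l ∈ {l : L | Pl.incid p l}, (Pl.lineSet l ∩ S) \ {p} := by
    ext a
    simp only [Set.mem_sdiff, Set.mem_singleton_iff, Set.mem_iUnion, Set.mem_inter_iff,
      Set.mem_ofPred_eq, exists_prop]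
    constructor
    · rintro ⟨haS, hap⟩
      obtain ⟨l, ⟨hpl, hal⟩, -⟩ := Pl.join p a (Ne.symm hap)
      exact ⟨l, hpl, ⟨hal, haS⟩, hap⟩
    · rintro ⟨l, -, ⟨-, haS⟩, hap⟩
      exact ⟨haS, hap⟩
  rw [hcover, (Pl.finite_pencil p).ncard_biUnion (fun _ _ => Set.toFinite _)
    (Pl.pencil_pairwiseDisjoint S p)]

end ProjPlane

namespace IsMaxArc

variable {P L : Type*} {Pl : ProjPlane P L} {A : Set P} {k : ℕ}

lemma ncard_inter_lineSet_of_mem (hA : IsMaxArc Pl A k) {x : P} (hx : x ∈ A) {l : L}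
    (hl : Pl.incid x l) : (Pl.lineSet l ∩ A).ncard = k := by
  have := Pl.finP
  refine (hA.2 l).resolve_right fun h => ?_
  exact ((Set.ncard_pos (Set.toFinite _)).2 ⟨x, (⟨hl, hx⟩ : x ∈ Pl.lineSet l ∩ A)⟩).ne' h

lemma ncard_eq_of_mem (hA : IsMaxArc Pl A k) {x : P} (hx : x ∈ A) :
    A.ncard = (Pl.q + 1) * (k - 1) + 1 := by
  have := Pl.finP
  have hpencil : (A \ {x}).ncard = (Pl.q + 1) * (k - 1) := by
    have hfin := Pl.finite_pencil x
    rw [Pl.ncard_sdiff_singleton_eq_finsum A x, finsum_mem_eq_finite_toFinset_sum _ hfin,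
      Finset.sum_congr rfl fun l hl => ?_, Finset.sum_const, ← Set.ncard_eq_toFinset_card _ hfin,
      Pl.point_deg, smul_eq_mul]
    rw [Set.Finite.mem_toFinset] at hl
    rw [Set.ncard_sdiff_singleton_of_mem (show x ∈ Pl.lineSet l ∩ A from ⟨hl, hx⟩),
      hA.ncard_inter_lineSet_of_mem hx hl]
  rw [← hpencil, Set.ncard_sdiff_singleton_add_one hx]

lemma dvd_ncard_of_notMem (hA : IsMaxArc Pl A k) {y : P} (hy : y ∉ A) : k ∣ A.ncard := by
  rw [← Set.sdiff_singleton_eq_self hy, Pl.ncard_sdiff_singleton_eq_finsum A y]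
  refine finsum_mem_induction (k ∣ ·) (dvd_zero k) (fun _ _ => dvd_add) fun l _ => ?_
  rw [Set.sdiff_singleton_eq_self fun h => hy h.2]
  rcases hA.2 l with h | h <;> simp [h]

end IsMaxArc

theorem maxArc_degree_dvd_order_general {P L : Type*} (Pl : ProjPlane P L) (A : Set P)
    (k : ℕ)
    (hA : IsMaxArc Pl A k) (hproper : A ≠ Set.univ) :
    k ∣ Pl.q := by
  obtain ⟨x, hx⟩ := hA.1
  obtain ⟨y, hy⟩ := (Set.ne_univ_iff_exists_notMem A).1 hproper
  have hdvd := hA.dvd_ncard_of_notMem hy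
  rw [hA.ncard_eq_of_mem hx] at hdvd
  rcases k with _ | m
  · simp at hdvd
  · rw [Nat.add_sub_cancel] at hdvd
    exact (Nat.dvd_add_right hdvd).1 ⟨Pl.q + 1, by ring⟩

/-- If a maximal arc of degree k (a nonempty proper set of points meeting
every line in exactly k or 0 points) exists in a projective plane of order q
with 1 < k < q, then k divides q. -/
theorem maxArc_degree_dvd_order {P L : Type*} (Pl : ProjPlane P L) (A : Set P)
    (k : ℕ) (hk1 : 1 < k) (hkq : k < Pl.q)
    (hA : IsMaxArc Pl A k) (hproper : A ≠ Set.univ) :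
    k ∣ Pl.q :=
  maxArc_degree_dvd_order_general Pl A k hA hproper
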